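/- arXiv:2310.20321 — 3 statements merged into one kernel-verified Lean document; each statement's English description precedes it below -/
import Mathlib

section
/- For a linear system with dynamics f(ξ) = Aξ, the function V(t,ξ) = ½ (ξ − x̂(t))ᵀ Σ(t)⁻¹ (ξ − x̂(t)) + (α/2) ∫₀ᵗ ‖y(s) − C x̂(s)‖² ds, where Σ solves the Riccati equation Σ' = AΣ + ΣAᵀ − αΣCᵀCΣ + FFᵀ with Σ(0) = I and x̂ solves x̂' = Ax̂ + αΣCᵀ(y − Cx̂) with x̂(0) = x₀, satisfies the Hamilton-Jacobi-Bellman equation ∂ₜV(t,ξ) = −∇ξV(t,ξ)ᵀAξ − ½‖Fᵀ∇ξV(t,ξ)‖² + (α/2)‖y(t) − Cξ‖², with initial condition V(0,ξ) = ½‖ξ − x₀‖². -/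
/-!
With `g = Σ⁻¹ (ξ - x̂)` the gradient of the quadratic part of `V`, the rule
`(Σ⁻¹)' = -Σ⁻¹ Σ' Σ⁻¹` gives `∂ₜ V = g ⬝ (ξ - x̂)' - ½ g ⬝ Σ' g + (α/2) |y - C x̂|²`.
Substituting the Riccati and observer equations and using `Σ g = ξ - x̂`, the terms coming
from `AΣ + ΣAᵀ` give `-g ⬝ A (ξ - x̂)`, and the gain term `αΣCᵀ(y - Cx̂)` together with
`-αΣCᵀCΣ` completes the square `(α/2) |(y - C x̂) - C (ξ - x̂)|² = (α/2) |y - C ξ|²`.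
-/

open Matrix

section Algebra

variable {R : Type*} [CommRing R] {ι κ μ : Type*} [Fintype ι] [Fintype κ] [Fintype μ]

theorem Matrix.dotProduct_mulVec_of_transpose_eq {S : Matrix ι ι R} (hS : Sᵀ = S) (u v : ι → R) :
    u ⬝ᵥ (S *ᵥ v) = (S *ᵥ u) ⬝ᵥ v := by
  conv_lhs => rw [← hS]
  rw [dotProduct_transpose_mulVec, dotProduct_comm]

theorem dotProduct_riccati_mulVec (A S : Matrix ι ι R) (F : Matrix ι κ R) (C : Matrix μ ι R)
    (α : R) (hS : Sᵀ = S) (g : ι → R) :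
    g ⬝ᵥ ((A * S + S * Aᵀ - α • (S * Cᵀ * C * S) + F * Fᵀ) *ᵥ g)
      = 2 * ((A *ᵥ (S *ᵥ g)) ⬝ᵥ g) - α * ((C *ᵥ (S *ᵥ g)) ⬝ᵥ (C *ᵥ (S *ᵥ g)))
        + (Fᵀ *ᵥ g) ⬝ᵥ (Fᵀ *ᵥ g) := by
  have hA : g ⬝ᵥ (S *ᵥ (Aᵀ *ᵥ g)) = (A *ᵥ (S *ᵥ g)) ⬝ᵥ g := by
    rw [dotProduct_mulVec_of_transpose_eq hS, dotProduct_transpose_mulVec, dotProduct_comm]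
  have hC : g ⬝ᵥ (S *ᵥ (Cᵀ *ᵥ (C *ᵥ (S *ᵥ g)))) = (C *ᵥ (S *ᵥ g)) ⬝ᵥ (C *ᵥ (S *ᵥ g)) := by
    rw [dotProduct_mulVec_of_transpose_eq hS, dotProduct_transpose_mulVec]
  have hF : g ⬝ᵥ (F *ᵥ (Fᵀ *ᵥ g)) = (Fᵀ *ᵥ g) ⬝ᵥ (Fᵀ *ᵥ g) := by
    rw [dotProduct_mulVec, ← mulVec_transpose]
  simp only [add_mulVec, sub_mulVec, smul_mulVec, ← mulVec_mulVec, dotProduct_add,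
    dotProduct_sub, dotProduct_smul, smul_eq_mul, hA, hC, hF]
  rw [dotProduct_comm g]
  ring

theorem riccati_observer_hjb_identity {K : Type*} [Field K] [CharZero K] (A S : Matrix ι ι K) (F : Matrix ι κ K) (C : Matrix μ ι K) (α : K) (hS : Sᵀ = S)
    (g x : ι → K) (w : μ → K) :
    (1/2) * (2 * (g ⬝ᵥ -(A *ᵥ x + α • ((S * Cᵀ) *ᵥ w)))
        - g ⬝ᵥ ((A * S + S * Aᵀ - α • (S * Cᵀ * C * S) + F * Fᵀ) *ᵥ g))
      + (α/2) * (w ⬝ᵥ w)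
    = -(g ⬝ᵥ (A *ᵥ (S *ᵥ g + x))) - (1/2) * ((Fᵀ *ᵥ g) ⬝ᵥ (Fᵀ *ᵥ g))
      + (α/2) * ((w - C *ᵥ (S *ᵥ g)) ⬝ᵥ (w - C *ᵥ (S *ᵥ g))) := by
  have hgain : g ⬝ᵥ ((S * Cᵀ) *ᵥ w) = (C *ᵥ (S *ᵥ g)) ⬝ᵥ w := by
    rw [← mulVec_mulVec, dotProduct_mulVec_of_transpose_eq hS, dotProduct_transpose_mulVec,
      dotProduct_comm]
  rw [dotProduct_riccati_mulVec A S F C α hS g]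
  simp only [dotProduct_neg, dotProduct_add, dotProduct_smul, smul_eq_mul, hgain, mulVec_add,
    sub_dotProduct, dotProduct_sub]
  rw [dotProduct_comm g (A *ᵥ S *ᵥ g), dotProduct_comm w (C *ᵥ S *ᵥ g)]
  ring

end Algebra

section Calculus

variable {𝕜 : Type*} [NontriviallyNormedField 𝕜] {ι κ : Type*} [Fintype ι] [Fintype κ] {t : 𝕜}

theorem Matrix.hasDerivAt_iff {M : 𝕜 → Matrix ι κ 𝕜} {M' : Matrix ι κ 𝕜} :
    HasDerivAt M M' t ↔ ∀ i j, HasDerivAt (fun s => M s i j) (M' i j) t :=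
  let _ := Matrix.normedAddCommGroup (m := ι) (n := κ) (α := 𝕜)
  hasDerivAt_pi.trans (forall_congr' fun _ => hasDerivAt_pi)

theorem HasDerivAt.dotProduct {u v : 𝕜 → ι → 𝕜} {u' v' : ι → 𝕜} (hu : HasDerivAt u u' t)
    (hv : HasDerivAt v v' t) :
    HasDerivAt (fun s => u s ⬝ᵥ v s) (u' ⬝ᵥ v t + u t ⬝ᵥ v') t := by
  have h := HasDerivAt.fun_sum (u := Finset.univ) fun i _ =>
    (hasDerivAt_pi.1 hu i).fun_mul (hasDerivAt_pi.1 hv i)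
  rw [Finset.sum_add_distrib] at h
  exact h

theorem HasDerivAt.mulVec {M : 𝕜 → Matrix κ ι 𝕜} {M' : Matrix κ ι 𝕜} {v : 𝕜 → ι → 𝕜}
    {v' : ι → 𝕜} (hM : HasDerivAt M M' t) (hv : HasDerivAt v v' t) :
    HasDerivAt (fun s => M s *ᵥ v s) (M' *ᵥ v t + M t *ᵥ v') t :=
  hasDerivAt_pi.2 fun i =>
    (hasDerivAt_pi.2 fun j => Matrix.hasDerivAt_iff.1 hM i j).dotProduct hv

theorem HasDerivAt.matrix_inv [CompleteSpace 𝕜] [DecidableEq ι] {M : 𝕜 → Matrix ι ι 𝕜}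
    {M' : Matrix ι ι 𝕜} (hM : HasDerivAt M M' t) (ht : IsUnit (M t)) :
    HasDerivAt (fun s => (M s)⁻¹) (-((M t)⁻¹ * M' * (M t)⁻¹)) t := by
  -- `HasDerivAt` only sees the topology, so any submultiplicative norm may be used here.
  let _ : NormedRing (Matrix ι ι 𝕜) := Matrix.linftyOpNormedRing
  let _ : NormedAlgebra 𝕜 (Matrix ι ι 𝕜) := Matrix.linftyOpNormedAlgebra
  have _ : HasSummableGeomSeries (Matrix ι ι 𝕜) :=
    @instHasSummableGeomSeriesOfCompleteSpace _ _ (FiniteDimensional.complete 𝕜 _)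
  obtain ⟨u, hu⟩ := ht
  have hinv := hasFDerivAt_ringInverse (𝕜 := 𝕜) u
  have hu' : (↑u⁻¹ : Matrix ι ι 𝕜) = (M t)⁻¹ := by
    rw [nonsing_inv_eq_ringInverse, ← hu, Ring.inverse_unit]
  rw [hu, hu'] at hinv
  have h := hinv.comp_hasDerivAt t hM
  simp only [Function.comp_def, ← nonsing_inv_eq_ringInverse] at h
  exact h

theorem HasDerivAt.dotProduct_inv_mulVec [CompleteSpace 𝕜] [DecidableEq ι]
    {S : 𝕜 → Matrix ι ι 𝕜} {S' : Matrix ι ι 𝕜} {e : 𝕜 → ι → 𝕜} {e' : ι → 𝕜}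
    (hS : HasDerivAt S S' t) (he : HasDerivAt e e' t) (hsymm : (S t)ᵀ = S t)
    (hunit : IsUnit (S t)) :
    HasDerivAt (fun s => e s ⬝ᵥ ((S s)⁻¹ *ᵥ e s))
      (2 * (((S t)⁻¹ *ᵥ e t) ⬝ᵥ e') - ((S t)⁻¹ *ᵥ e t) ⬝ᵥ (S' *ᵥ ((S t)⁻¹ *ᵥ e t))) t := by
  have hPsymm : ((S t)⁻¹)ᵀ = (S t)⁻¹ := by rw [transpose_nonsing_inv, hsymm]
  convert he.dotProduct ((hS.matrix_inv hunit).mulVec he) using 1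
  simp only [neg_mulVec, ← mulVec_mulVec, dotProduct_add, dotProduct_neg,
    dotProduct_mulVec_of_transpose_eq hPsymm (e t)]
  rw [dotProduct_comm e']
  ring

end Calculus

theorem mortensen_linear_value_function_solves_HJB_general
    {n m r : ℕ}
    (A : Matrix (Fin n) (Fin n) ℝ) (F : Matrix (Fin n) (Fin m) ℝ)
    (C : Matrix (Fin r) (Fin n) ℝ) (x0 : Fin n → ℝ)
    (α : ℝ)
    (y : ℝ → Fin r → ℝ) (hy : Continuous y)
    (Sg : ℝ → Matrix (Fin n) (Fin n) ℝ) (xh : ℝ → Fin n → ℝ)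
    (hSgsym : ∀ t : ℝ, (Sg t)ᵀ = Sg t)
    (hSginv : ∀ t : ℝ, IsUnit (Sg t))
    (hRic : ∀ t : ℝ, ∀ i j, HasDerivAt (fun s => Sg s i j)
      ((A * Sg t + Sg t * Aᵀ - α • (Sg t * Cᵀ * C * Sg t) + F * Fᵀ) i j) t)
    (hSg0 : Sg 0 = 1)
    (hobs : ∀ t : ℝ, HasDerivAt xh
      (A *ᵥ xh t + α • ((Sg t * Cᵀ) *ᵥ (y t - C *ᵥ xh t))) t)
    (hx0 : xh 0 = x0)
    (V : ℝ → (Fin n → ℝ) → ℝ)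
    (hV : ∀ t ξ, V t ξ =
      (1/2) * ((ξ - xh t) ⬝ᵥ ((Sg t)⁻¹ *ᵥ (ξ - xh t)))
      + (α/2) * ∫ s in (0:ℝ)..t, (y s - C *ᵥ xh s) ⬝ᵥ (y s - C *ᵥ xh s)) :
    (∀ (t : ℝ) (ξ : Fin n → ℝ), HasDerivAt (fun s => V s ξ)
      (-(((Sg t)⁻¹ *ᵥ (ξ - xh t)) ⬝ᵥ (A *ᵥ ξ))
        - (1/2) * ((Fᵀ *ᵥ ((Sg t)⁻¹ *ᵥ (ξ - xh t))) ⬝ᵥ (Fᵀ *ᵥ ((Sg t)⁻¹ *ᵥ (ξ - xh t))))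
        + (α/2) * ((y t - C *ᵥ ξ) ⬝ᵥ (y t - C *ᵥ ξ))) t)
    ∧ (∀ ξ : Fin n → ℝ, V 0 ξ = (1/2) * ((ξ - x0) ⬝ᵥ (ξ - x0))) := by
  refine ⟨fun t ξ => ?_, fun ξ => by simp [hV, hSg0, hx0]⟩
  have hxh : Continuous xh := continuous_iff_continuousAt.2 fun s => (hobs s).continuousAt
  have hcost := ((by fun_prop : Continuous fun s => (y s - C *ᵥ xh s) ⬝ᵥ (y s - C *ᵥ xh s))
    |>.integral_hasStrictDerivAt 0 t).hasDerivAt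
  have hquad := (Matrix.hasDerivAt_iff.2 (hRic t)).dotProduct_inv_mulVec
    ((hobs t).const_sub ξ) (hSgsym t) (hSginv t)
  set g := (Sg t)⁻¹ *ᵥ (ξ - xh t)
  have hSg : Sg t *ᵥ g = ξ - xh t := by
    rw [mulVec_mulVec, mul_nonsing_inv _ ((isUnit_iff_isUnit_det _).1 (hSginv t)), one_mulVec]
  have hid := riccati_observer_hjb_identity A (Sg t) F C α (hSgsym t) g (xh t) (y t - C *ᵥ xh t)
  have hinnov : y t - C *ᵥ xh t - C *ᵥ (ξ - xh t) = y t - C *ᵥ ξ := by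
    rw [mulVec_sub]; abel
  rw [hSg, sub_add_cancel, hinnov] at hid
  simp_rw [hV]
  rw [← hid]
  exact (hquad.const_mul _).add (hcost.const_mul _)

theorem mortensen_linear_value_function_solves_HJB
    {n m r : ℕ}
    (A : Matrix (Fin n) (Fin n) ℝ) (F : Matrix (Fin n) (Fin m) ℝ)
    (C : Matrix (Fin r) (Fin n) ℝ) (x0 : Fin n → ℝ)
    (α T : ℝ) (hα : 0 < α) (hT : 0 < T)
    (y : ℝ → Fin r → ℝ) (hy : Continuous y)
    (Sg : ℝ → Matrix (Fin n) (Fin n) ℝ) (xh : ℝ → Fin n → ℝ)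
    (hSgsym : ∀ t : ℝ, (Sg t)ᵀ = Sg t)
    (hSginv : ∀ t : ℝ, IsUnit (Sg t))
    (hRic : ∀ t : ℝ, ∀ i j, HasDerivAt (fun s => Sg s i j)
      ((A * Sg t + Sg t * Aᵀ - α • (Sg t * Cᵀ * C * Sg t) + F * Fᵀ) i j) t)
    (hSg0 : Sg 0 = 1)
    (hobs : ∀ t : ℝ, HasDerivAt xh
      (A *ᵥ xh t + α • ((Sg t * Cᵀ) *ᵥ (y t - C *ᵥ xh t))) t)
    (hx0 : xh 0 = x0)
    (V : ℝ → (Fin n → ℝ) → ℝ)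
    (hV : ∀ t ξ, V t ξ =
      (1/2) * ((ξ - xh t) ⬝ᵥ ((Sg t)⁻¹ *ᵥ (ξ - xh t)))
      + (α/2) * ∫ s in (0:ℝ)..t, (y s - C *ᵥ xh s) ⬝ᵥ (y s - C *ᵥ xh s)) :
    (∀ (t : ℝ) (ξ : Fin n → ℝ), HasDerivAt (fun s => V s ξ)
      (-(((Sg t)⁻¹ *ᵥ (ξ - xh t)) ⬝ᵥ (A *ᵥ ξ))
        - (1/2) * ((Fᵀ *ᵥ ((Sg t)⁻¹ *ᵥ (ξ - xh t))) ⬝ᵥ (Fᵀ *ᵥ ((Sg t)⁻¹ *ᵥ (ξ - xh t))))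
        + (α/2) * ((y t - C *ᵥ ξ) ⬝ᵥ (y t - C *ᵥ ξ))) t)
    ∧ (∀ ξ : Fin n → ℝ, V 0 ξ = (1/2) * ((ξ - x0) ⬝ᵥ (ξ - x0))) :=
  mortensen_linear_value_function_solves_HJB_general A F C x0 α y hy Sg xh hSgsym hSginv hRic hSg0
    hobs hx0 V hV
end

section
/- Let V be a C³ (in ξ), C¹ (in t) solution of the HJB equation ∂ₜV = −∇ξVᵀ f − ½‖Fᵀ∇ξV‖² + (α/2)‖y(t) − Cξ‖² with f : ℝⁿ → ℝⁿ of class C¹. Let x̂ be differentiable with ∇ξV(t, x̂(t)) = 0 and ∇²ξξV(t, x̂(t)) invertible for all t. Then x̂ satisfies the Mortensen observer equation x̂'(t) = f(x̂(t)) + α ∇²ξξV(t, x̂(t))⁻¹ Cᵀ (y(t) − C x̂(t)). -/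
/-!
Differentiating `∇ξV(t, x̂(t)) = 0` along the trajectory gives `∂ₜ∇ξV + ∇²ξξV · x̂' = 0`.
Since `∂ₜ∇ξV = ∇ξ∂ₜV`, the HJB equation identifies `∂ₜ∇ξV` with the gradient of its right-hand
side; at a critical point of `V(t, ·)` the term quadratic in `∇ξV` has zero derivative, and with the
symmetry of the Hessian that gradient is `-∇²ξξV f - α Cᵀ(y - Cξ)`. Inverting the Hessian gives
the observer equation.
-/

open Matrix

noncomputable def dotCLM {n : ℕ} (g : Fin n → ℝ) : (Fin n → ℝ) →L[ℝ] ℝ :=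
  LinearMap.toContinuousLinearMap
    { toFun := fun v => g ⬝ᵥ v
      map_add' := by intro x y; simp [dotProduct_add]
      map_smul' := by intro c x; simp [dotProduct_smul] }

noncomputable def mvCLM {n k : ℕ} (M : Matrix (Fin n) (Fin k) ℝ) :
    (Fin k → ℝ) →L[ℝ] (Fin n → ℝ) :=
  LinearMap.toContinuousLinearMap M.mulVecLin

noncomputable def pairCLM {n : ℕ} (a : Fin n → ℝ) (M : Matrix (Fin n) (Fin n) ℝ) :
    (ℝ × (Fin n → ℝ)) →L[ℝ] (Fin n → ℝ) :=
  LinearMap.toContinuousLinearMap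
    { toFun := fun p => p.1 • a + M *ᵥ p.2
      map_add' := by intro p q; simp [add_smul, Matrix.mulVec_add]; module
      map_smul' := by intro s p; simp [smul_smul, Matrix.mulVec_smul, smul_add] }

noncomputable def dotProductCLM (n : ℕ) : (Fin n → ℝ) →L[ℝ] (Fin n → ℝ) →L[ℝ] ℝ :=
  (dotProductBilin ℝ ℝ).toContinuousBilinearMap

theorem dotCLM_apply {n : ℕ} (g v : Fin n → ℝ) : dotCLM g v = g ⬝ᵥ v := rfl

theorem mvCLM_apply {n k : ℕ} (M : Matrix (Fin n) (Fin k) ℝ) (v : Fin k → ℝ) :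
    mvCLM M v = M *ᵥ v := rfl

theorem pairCLM_apply {n : ℕ} (a : Fin n → ℝ) (M : Matrix (Fin n) (Fin n) ℝ)
    (p : ℝ × (Fin n → ℝ)) : pairCLM a M p = p.1 • a + M *ᵥ p.2 := rfl

theorem dotCLM_injective {n : ℕ} : Function.Injective (dotCLM (n := n)) := by
  intro g g' h
  ext i
  simpa [dotCLM_apply] using DFunLike.congr_fun h (Pi.single i 1)

theorem HasFDerivAt.dotProduct {E : Type*} [NormedAddCommGroup E] [NormedSpace ℝ E] {n : ℕ}
    {u v : E → Fin n → ℝ} {u' v' : E →L[ℝ] Fin n → ℝ} {x : E}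
    (hu : HasFDerivAt u u' x) (hv : HasFDerivAt v v' x) :
    HasFDerivAt (fun y => u y ⬝ᵥ v y) ((dotCLM (u x)).comp v' + (dotCLM (v x)).comp u') x := by
  refine ((dotProductCLM n).hasFDerivAt_of_bilinear hu hv).congr_fderiv ?_
  ext h
  simp [dotProductCLM, dotCLM_apply, dotProduct_comm]

theorem transpose_eq_of_hasFDerivAt_gradient {n : ℕ} {V : (Fin n → ℝ) → ℝ}
    {G : (Fin n → ℝ) → Fin n → ℝ} {H : Matrix (Fin n) (Fin n) ℝ} {x : Fin n → ℝ}
    (hV : ∀ ξ, HasFDerivAt V (dotCLM (G ξ)) ξ) (hG : HasFDerivAt G (mvCLM H) x) : Hᵀ = H := by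
  have hG' : HasFDerivAt (fun ξ => dotCLM (G ξ)) ((dotProductCLM n).comp (mvCLM H)) x :=
    (dotProductCLM n).hasFDerivAt.comp x hG
  ext i j
  simpa [dotProductCLM, mvCLM_apply] using
    second_derivative_symmetric hV hG' (Pi.single i 1) (Pi.single j 1)

theorem add_mulVec_eq_zero_of_forall_eq_zero {n : ℕ} {G : ℝ → (Fin n → ℝ) → Fin n → ℝ}
    {xh : ℝ → Fin n → ℝ} {a d : Fin n → ℝ} {M : Matrix (Fin n) (Fin n) ℝ} {t : ℝ}
    (hG : HasFDerivAt (fun p : ℝ × (Fin n → ℝ) => G p.1 p.2) (pairCLM a M) (t, xh t))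
    (hxh : HasDerivAt xh d t) (hzero : ∀ s, G s (xh s) = 0) : a + M *ᵥ d = 0 := by
  have hcomp := hG.comp_hasDerivAt t ((hasDerivAt_id t).prodMk hxh)
  have hconst : (fun p : ℝ × (Fin n → ℝ) => G p.1 p.2) ∘ (fun s => (id s, xh s))
      = fun _ => 0 := funext hzero
  rw [hconst] at hcomp
  simpa [pairCLM_apply] using hcomp.unique (hasDerivAt_const t 0)

theorem hasFDerivAt_hjb_rhs_of_eq_zero {n m r : ℕ} {f g : (Fin n → ℝ) → Fin n → ℝ}
    {Hx : Matrix (Fin n) (Fin n) ℝ} {x : Fin n → ℝ} (F : Matrix (Fin n) (Fin m) ℝ)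
    (C : Matrix (Fin r) (Fin n) ℝ) (α : ℝ) (η : Fin r → ℝ)
    (hf : DifferentiableAt ℝ f x) (hg : HasFDerivAt g (mvCLM Hx) x) (hgx : g x = 0) :
    HasFDerivAt (fun ξ => -(g ξ ⬝ᵥ f ξ) - (1/2) * ((Fᵀ *ᵥ g ξ) ⬝ᵥ (Fᵀ *ᵥ g ξ))
        + (α/2) * ((η - C *ᵥ ξ) ⬝ᵥ (η - C *ᵥ ξ)))
      (dotCLM (-(Hxᵀ *ᵥ f x) - α • (Cᵀ *ᵥ (η - C *ᵥ x)))) x := by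
  have hFg : HasFDerivAt (fun ξ => Fᵀ *ᵥ g ξ) ((mvCLM Fᵀ).comp (mvCLM Hx)) x :=
    (mvCLM Fᵀ).hasFDerivAt.comp x hg
  have hres : HasFDerivAt (fun ξ => η - C *ᵥ ξ) (-mvCLM C) x :=
    ((hasFDerivAt_const η x).sub (mvCLM C).hasFDerivAt).congr_fderiv (zero_sub _)
  refine (((hg.dotProduct hf.hasFDerivAt).neg.sub ((hFg.dotProduct hFg).const_mul _)).add
    ((hres.dotProduct hres).const_mul _)).congr_fderiv ?_
  ext v
  simp only [_root_.add_apply, _root_.sub_apply, _root_.neg_apply, _root_.smul_apply,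
    ContinuousLinearMap.comp_apply, mvCLM_apply, dotCLM_apply, hgx, mulVec_zero, zero_dotProduct,
    smul_eq_mul, mulVec_transpose, ← dotProduct_mulVec, sub_dotProduct, neg_dotProduct,
    smul_dotProduct, dotProduct_neg]
  ring

theorem eq_add_inv_mulVec_of_mulVec_eq {ι K : Type*} [Fintype ι] [DecidableEq ι] [Field K]
    {H : Matrix ι ι K} (hH : IsUnit H) {d u b : ι → K} (h : H *ᵥ d = H *ᵥ u + b) :
    d = u + H⁻¹ *ᵥ b := by
  apply mulVec_injective_iff_isUnit.mpr hH
  rw [h, mulVec_add, mulVec_mulVec, mul_nonsing_inv _ ((isUnit_iff_isUnit_det H).mp hH),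
    one_mulVec]

theorem mortensen_observer_equation_general
    {n m r : ℕ}
    (f : (Fin n → ℝ) → (Fin n → ℝ)) (J : (Fin n → ℝ) → Matrix (Fin n) (Fin n) ℝ)
    (hf : ∀ ξ, HasFDerivAt f (mvCLM (J ξ)) ξ)
    (F : Matrix (Fin n) (Fin m) ℝ) (C : Matrix (Fin r) (Fin n) ℝ)
    (α : ℝ)
    (y : ℝ → Fin r → ℝ)
    (V : ℝ → (Fin n → ℝ) → ℝ)
    (G Gt : ℝ → (Fin n → ℝ) → (Fin n → ℝ))
    (H : ℝ → (Fin n → ℝ) → Matrix (Fin n) (Fin n) ℝ)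
    (Vt : ℝ → (Fin n → ℝ) → ℝ)
    -- V is C¹ in t with time derivative Vt, C² in ξ with gradient G and Hessian H
    (hG : ∀ (t : ℝ) (ξ : Fin n → ℝ), HasFDerivAt (V t) (dotCLM (G t ξ)) ξ)
    (hH : ∀ (t : ℝ) (ξ : Fin n → ℝ), HasFDerivAt (fun ζ => G t ζ) (mvCLM (H t ξ)) ξ)
    -- Schwarz: the spatial gradient of ∂ₜV is ∂ₜ∇ξV
    (hmix : ∀ (t : ℝ) (ξ : Fin n → ℝ), HasFDerivAt (fun ζ => Vt t ζ) (dotCLM (Gt t ξ)) ξ)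
    -- the HJB equation
    (hHJB : ∀ (t : ℝ) (ξ : Fin n → ℝ), Vt t ξ =
      -(G t ξ ⬝ᵥ f ξ)
      - (1/2) * ((Fᵀ *ᵥ G t ξ) ⬝ᵥ (Fᵀ *ᵥ G t ξ))
      + (α/2) * ((y t - C *ᵥ ξ) ⬝ᵥ (y t - C *ᵥ ξ)))
    (xh : ℝ → Fin n → ℝ) (d : ℝ → Fin n → ℝ)
    (hxh : ∀ t : ℝ, HasDerivAt xh (d t) t)
    (hcrit : ∀ t : ℝ, G t (xh t) = 0)
    (hinv : ∀ t : ℝ, IsUnit (H t (xh t)))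
    -- G is C¹ jointly (chain rule hypothesis)
    (hjoint : ∀ t : ℝ, HasFDerivAt (fun p : ℝ × (Fin n → ℝ) => G p.1 p.2)
      (pairCLM (Gt t (xh t)) (H t (xh t))) (t, xh t)) :
    ∀ t : ℝ, d t = f (xh t)
      + α • ((H t (xh t))⁻¹ *ᵥ (Cᵀ *ᵥ (y t - C *ᵥ xh t))) := by
  intro t
  have hsymm : (H t (xh t))ᵀ = H t (xh t) :=
    transpose_eq_of_hasFDerivAt_gradient (hG t) (hH t (xh t))
  have hGt_eq : Gt t (xh t) = -(H t (xh t) *ᵥ f (xh t)) - α • (Cᵀ *ᵥ (y t - C *ᵥ xh t)) := by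
    have hrhs := hasFDerivAt_hjb_rhs_of_eq_zero F C α (y t) (hf (xh t)).differentiableAt
      (hH t (xh t)) (hcrit t)
    rw [← funext (hHJB t), hsymm] at hrhs
    exact dotCLM_injective ((hmix t (xh t)).unique hrhs)
  have hzero := add_mulVec_eq_zero_of_forall_eq_zero (hjoint t) (hxh t) hcrit
  rw [← mulVec_smul]
  refine eq_add_inv_mulVec_of_mulVec_eq (hinv t) ?_
  rw [hGt_eq] at hzero
  linear_combination hzero

theorem mortensen_observer_equation
    {n m r : ℕ}
    (f : (Fin n → ℝ) → (Fin n → ℝ)) (J : (Fin n → ℝ) → Matrix (Fin n) (Fin n) ℝ)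
    (hf : ∀ ξ, HasFDerivAt f (mvCLM (J ξ)) ξ)
    (hJcont : Continuous J)
    (F : Matrix (Fin n) (Fin m) ℝ) (C : Matrix (Fin r) (Fin n) ℝ)
    (α : ℝ) (hα : 0 < α)
    (y : ℝ → Fin r → ℝ) (hy : Continuous y)
    (V : ℝ → (Fin n → ℝ) → ℝ)
    (G Gt : ℝ → (Fin n → ℝ) → (Fin n → ℝ))
    (H : ℝ → (Fin n → ℝ) → Matrix (Fin n) (Fin n) ℝ)
    (Vt : ℝ → (Fin n → ℝ) → ℝ)
    -- V is C¹ in t with time derivative Vt, C² in ξ with gradient G and Hessian H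
    (hVt : ∀ (t : ℝ) (ξ : Fin n → ℝ), HasDerivAt (fun s => V s ξ) (Vt t ξ) t)
    (hG : ∀ (t : ℝ) (ξ : Fin n → ℝ), HasFDerivAt (V t) (dotCLM (G t ξ)) ξ)
    (hH : ∀ (t : ℝ) (ξ : Fin n → ℝ), HasFDerivAt (fun ζ => G t ζ) (mvCLM (H t ξ)) ξ)
    (hGt : ∀ (t : ℝ) (ξ : Fin n → ℝ), HasDerivAt (fun s => G s ξ) (Gt t ξ) t)
    -- Schwarz: the spatial gradient of ∂ₜV is ∂ₜ∇ξV
    (hmix : ∀ (t : ℝ) (ξ : Fin n → ℝ), HasFDerivAt (fun ζ => Vt t ζ) (dotCLM (Gt t ξ)) ξ)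
    -- the HJB equation
    (hHJB : ∀ (t : ℝ) (ξ : Fin n → ℝ), Vt t ξ =
      -(G t ξ ⬝ᵥ f ξ)
      - (1/2) * ((Fᵀ *ᵥ G t ξ) ⬝ᵥ (Fᵀ *ᵥ G t ξ))
      + (α/2) * ((y t - C *ᵥ ξ) ⬝ᵥ (y t - C *ᵥ ξ)))
    (xh : ℝ → Fin n → ℝ) (d : ℝ → Fin n → ℝ)
    (hxh : ∀ t : ℝ, HasDerivAt xh (d t) t)
    (hcrit : ∀ t : ℝ, G t (xh t) = 0)
    (hinv : ∀ t : ℝ, IsUnit (H t (xh t)))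
    -- G is C¹ jointly (chain rule hypothesis)
    (hjoint : ∀ t : ℝ, HasFDerivAt (fun p : ℝ × (Fin n → ℝ) => G p.1 p.2)
      (pairCLM (Gt t (xh t)) (H t (xh t))) (t, xh t)) :
    ∀ t : ℝ, d t = f (xh t)
      + α • ((H t (xh t))⁻¹ *ᵥ (Cᵀ *ᵥ (y t - C *ᵥ xh t))) :=
  mortensen_observer_equation_general f J hf F C α y V G Gt H Vt hG hH hmix hHJB xh d hxh hcrit hinv
    hjoint
end

section
/- The hyperbolic cross index set J_Space(s) = { i ∈ ℕ₀ⁿ : ∏_{j=1}^n (i_j + 1) ≤ s + 1 } has cardinality at most (s+1)·(1 + log(s+1))^{n−1} · C for a constant C depending only on n; in particular for fixed s its cardinality grows polynomially (not exponentially) in n in the sense that |J_Space(s)| ≤ (s+1) · binom(n + ⌊log₂(s+1)⌋, ⌊log₂(s+1)⌋) · 2^{⌊log₂(s+1)⌋}. -/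
/-! Group the indices by their dyadic block `a j = ⌊log₂ (i j + 1)⌋`. A block holds
`∏ j, 2 ^ a j = 2 ^ ∑ j, a j` indices, and `2 ^ ∑ j, a j ≤ ∏ j, (i j + 1) ≤ s + 1` forces
`∑ j, a j ≤ L := ⌊log₂ (s + 1)⌋`. So there are at most `(n + L).choose L` occupied blocks
(stars and bars, after adjoining the slack `L - ∑ j, a j` as an extra coordinate), each with at
most `2 ^ L` indices. -/

open Finset

theorem Nat.sum_log_le_log_prod {ι : Type*} (b : ℕ) (s : Finset ι) {f : ι → ℕ}
    (hf : ∀ i ∈ s, f i ≠ 0) : ∑ i ∈ s, Nat.log b (f i) ≤ Nat.log b (∏ i ∈ s, f i) := by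
  rcases le_or_gt b 1 with hb | hb
  · simp [Nat.log_of_left_le_one hb]
  rw [Nat.le_log_iff_pow_le hb (prod_ne_zero_iff.2 hf), ← prod_pow_eq_pow_sum]
  exact prod_le_prod' fun i hi => Nat.pow_log_le_self b (hf i hi)

theorem Nat.mem_Ico_of_log_two_succ_eq {x a : ℕ} (h : Nat.log 2 (x + 1) = a) :
    x ∈ Ico (2 ^ a - 1) (2 ^ (a + 1) - 1) := by
  have := (Nat.log_eq_iff (Or.inr ⟨one_lt_two, x.succ_ne_zero⟩)).1 h
  have : 1 ≤ 2 ^ a := Nat.one_le_two_pow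
  rw [mem_Ico]
  omega

theorem Nat.card_Ico_two_pow_sub_one (a : ℕ) : #(Ico (2 ^ a - 1) (2 ^ (a + 1) - 1)) = 2 ^ a := by
  have : 1 ≤ 2 ^ a := Nat.one_le_two_pow
  rw [Nat.card_Ico, pow_succ]
  omega

def dyadicBlock {ι : Type*} (i : ι → ℕ) : ι → ℕ := fun j => Nat.log 2 (i j + 1)

theorem card_filter_dyadicBlock_eq_le {ι : Type*} [Fintype ι] [DecidableEq ι]
    (T : Finset (ι → ℕ)) (a : ι → ℕ) : #{i ∈ T | dyadicBlock i = a} ≤ 2 ^ ∑ j, a j := by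
  calc #{i ∈ T | dyadicBlock i = a}
      ≤ #(Fintype.piFinset fun j => Ico (2 ^ a j - 1) (2 ^ (a j + 1) - 1)) := by
        refine card_le_card fun i hi => Fintype.mem_piFinset.2 fun j => ?_
        exact Nat.mem_Ico_of_log_two_succ_eq (congrFun (mem_filter.1 hi).2 j)
    _ = 2 ^ ∑ j, a j := by
        simp only [Fintype.card_piFinset, Nat.card_Ico_two_pow_sub_one, prod_pow_eq_pow_sum]

theorem sum_dyadicBlock_le {ι : Type*} [Fintype ι] {i : ι → ℕ} {s : ℕ}
    (hi : ∏ j, (i j + 1) ≤ s + 1) : ∑ j, dyadicBlock i j ≤ Nat.log 2 (s + 1) :=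
  (Nat.sum_log_le_log_prod 2 univ fun j _ => (i j).succ_ne_zero).trans (Nat.log_mono_right hi)

theorem Finset.Nat.card_antidiagonalTuple (k n : ℕ) :
    #(Nat.antidiagonalTuple k n) = (k + n - 1).choose n := by
  rw [card_eq_of_equiv_fintype ((Equiv.subtypeEquivRight fun _ => Nat.mem_antidiagonalTuple).trans
    (Sym.equivNatSumOfFintype (Fin k) n).symm), Sym.card_sym_eq_choose, Fintype.card_fin]

def tuplesSumLe (n L : ℕ) : Finset (Fin n → ℕ) :=
  {a ∈ Fintype.piFinset fun _ => range (L + 1) | ∑ j, a j ≤ L}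

theorem mem_tuplesSumLe {n L : ℕ} {a : Fin n → ℕ} : a ∈ tuplesSumLe n L ↔ ∑ j, a j ≤ L := by
  refine mem_filter.trans ⟨And.right, fun h => ⟨Fintype.mem_piFinset.2 fun j => ?_, h⟩⟩
  exact mem_range_succ_iff.2 ((single_le_sum (fun _ _ => Nat.zero_le _) (mem_univ j)).trans h)

theorem card_tuplesSumLe (n L : ℕ) : #(tuplesSumLe n L) = (n + L).choose L := by
  rw [show n + L = n + 1 + L - 1 by omega, ← Finset.Nat.card_antidiagonalTuple]
  refine card_nbij' (fun a => Fin.cons (L - ∑ j, a j) a) Fin.tail ?_ ?_ ?_ ?_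
  · intro a ha
    simp only [mem_coe, mem_tuplesSumLe, Nat.mem_antidiagonalTuple, Fin.sum_cons] at *
    omega
  · intro P hP
    simp only [mem_coe, mem_tuplesSumLe, Nat.mem_antidiagonalTuple, Fin.sum_univ_succ] at *
    exact hP ▸ Nat.le_add_left _ _
  · intro a _
    exact Fin.tail_cons _ _
  · intro P hP
    rw [mem_coe, Nat.mem_antidiagonalTuple, Fin.sum_univ_succ] at hP
    change Fin.cons (L - ∑ j : Fin n, P j.succ) (Fin.tail P) = P
    rw [← hP, Nat.add_sub_cancel, Fin.cons_self_tail]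

def hyperbolicCross {ι : Type*} [Fintype ι] [DecidableEq ι] (s : ℕ) : Finset (ι → ℕ) :=
  {i ∈ Fintype.piFinset fun _ => range (s + 1) | ∏ j, (i j + 1) ≤ s + 1}

theorem mem_hyperbolicCross {ι : Type*} [Fintype ι] [DecidableEq ι] {s : ℕ} {i : ι → ℕ} :
    i ∈ hyperbolicCross s ↔ ∏ j, (i j + 1) ≤ s + 1 := by
  refine mem_filter.trans ⟨And.right, fun h => ⟨Fintype.mem_piFinset.2 fun j => ?_, h⟩⟩
  exact mem_range_succ_iff.2 (Nat.le_of_succ_le_succ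
    ((single_le_prod' (fun k _ => Nat.le_add_left 1 (i k)) (mem_univ j)).trans h))

theorem hyperbolic_cross_card_bound (n s : ℕ) :
    {i : Fin n → ℕ | ∏ j, (i j + 1) ≤ s + 1}.Finite
    ∧ Nat.card {i : Fin n → ℕ // ∏ j, (i j + 1) ≤ s + 1}
      ≤ (s + 1) * (n + Nat.log 2 (s + 1)).choose (Nat.log 2 (s + 1))
          * 2 ^ (Nat.log 2 (s + 1)) := by
  set J : Finset (Fin n → ℕ) := hyperbolicCross s
  have hJ : {i : Fin n → ℕ | ∏ j, (i j + 1) ≤ s + 1} = J :=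
    Set.ext fun _ => mem_hyperbolicCross.symm
  refine ⟨hJ ▸ J.finite_toSet, ?_⟩
  rw [← Set.coe_ofPred, hJ, Nat.card_coe_set_eq, Set.ncard_coe_finset]
  set L := Nat.log 2 (s + 1)
  have hblocks : J.image dyadicBlock ⊆ tuplesSumLe n L := fun a ha => by
    obtain ⟨i, hi, rfl⟩ := mem_image.1 ha
    exact mem_tuplesSumLe.2 (sum_dyadicBlock_le (mem_hyperbolicCross.1 hi))
  have hfibers : ∀ a ∈ J.image dyadicBlock, #{i ∈ J | dyadicBlock i = a} ≤ 2 ^ L := fun a ha =>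
    (card_filter_dyadicBlock_eq_le J a).trans
      (Nat.pow_le_pow_right two_pos (mem_tuplesSumLe.1 (hblocks ha)))
  calc #J ≤ 2 ^ L * #(J.image dyadicBlock) := card_le_mul_card_image J _ hfibers
    _ ≤ 2 ^ L * (n + L).choose L := by grw [card_le_card hblocks, card_tuplesSumLe]
    _ ≤ (s + 1) * (n + L).choose L * 2 ^ L := by
        rw [mul_comm]
        gcongr
        exact Nat.le_mul_of_pos_left _ s.succ_pos
end
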